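/- arXiv:1304.3477 — 3 statements merged into one kernel-verified Lean document; each statement's English description precedes it below -/
import Mathlib

section
/- Let $n, p$ be positive natural numbers, $k_x \in \mathbb{R}^{n \times n}$, $k_\theta \in \mathbb{R}$, $S \in \mathbb{R}^{p \times p}$, and let $\Gamma \in \mathbb{R}^{p \times p}$ be symmetric and invertible. Let $Y : \mathbb{R} \to \mathbb{R}^{n \times p}$ be any matrix-valued function, and let $\tilde{x} : \mathbb{R} \to \mathbb{R}^n$ and $\tilde{\theta} : \mathbb{R} \to \mathbb{R}^p$ be differentiable functions satisfying, for all $t$, $\tilde{x}'(t) = Y(t)\tilde{\theta}(t) - k_x \tilde{x}(t)$ and $\tilde{\theta}'(t) = -\Gamma\,Y(t)^{\mathsf T}\tilde{x}(t) - k_\theta\,\Gamma\,S\,\tilde{\theta}(t)$. Then the function $V_0(t) = \tfrac{1}{2}\tilde{x}(t)^{\mathsf T}\tilde{x}(t) + \tfrac{1}{2}\tilde{\theta}(t)^{\mathsf T}\Gamma^{-1}\tilde{\theta}(t)$ is differentiable with $V_0'(t) = -\tilde{x}(t)^{\mathsf T} k_x \tilde{x}(t) - k_\theta\,\tilde{\theta}(t)^{\mathsf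 T} S\,\tilde{\theta}(t)$ for all $t$. -/
/-!
Since `Γ⁻¹` is symmetric, `V₀' = x̃ ⬝ x̃' + θ̃ ⬝ Γ⁻¹ θ̃'`. The factor `Γ⁻¹` cancels the gain `Γ` in
the parameter error dynamics, and the coupling terms `x̃ᵀ Y θ̃` (from `x̃'`) and `-θ̃ᵀ Yᵀ x̃`
(from `θ̃'`) cancel each other, leaving only the damping terms.
-/

open Matrix

section Calculus

variable {𝕜 ι : Type*} [NontriviallyNormedField 𝕜] [Fintype ι]
  {u v : 𝕜 → ι → 𝕜} {u' v' : ι → 𝕜} {t : 𝕜}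

theorem HasDerivAt.dotProduct (hu : HasDerivAt u u' t) (hv : HasDerivAt v v' t) :
    HasDerivAt (fun τ => u τ ⬝ᵥ v τ) (u' ⬝ᵥ v t + u t ⬝ᵥ v') t := by
  have hsum := HasDerivAt.fun_sum (u := Finset.univ) fun i _ =>
    (hasDerivAt_pi.mp hu i).mul (hasDerivAt_pi.mp hv i)
  simpa only [_root_.dotProduct, Pi.mul_apply, Finset.sum_add_distrib] using hsum

theorem HasDerivAt.const_mulVec {κ : Type*} [Fintype κ] (A : Matrix κ ι 𝕜)
    (hu : HasDerivAt u u' t) : HasDerivAt (fun τ => A *ᵥ u τ) (A *ᵥ u') t :=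
  hasDerivAt_pi.mpr fun i => by
    simpa only [mulVec, _root_.dotProduct] using
      HasDerivAt.fun_sum (u := Finset.univ) fun j _ => (hasDerivAt_pi.mp hu j).const_mul (A i j)

theorem HasDerivAt.dotProduct_mulVec_self {A : Matrix ι ι 𝕜} (hA : A.IsSymm)
    (hu : HasDerivAt u u' t) :
    HasDerivAt (fun τ => u τ ⬝ᵥ A *ᵥ u τ) (2 * (u t ⬝ᵥ A *ᵥ u')) t := by
  convert hu.dotProduct (hu.const_mulVec A) using 1
  rw [dotProduct_comm, dotProduct_mulVec, ← mulVec_transpose, hA.eq, two_mul]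

end Calculus

theorem Matrix.nonsing_inv_mulVec_mulVec {ι R : Type*} [Fintype ι] [DecidableEq ι] [CommRing R]
    {A : Matrix ι ι R} (hA : IsUnit A.det) (v : ι → R) : A⁻¹ *ᵥ (A *ᵥ v) = v := by
  rw [mulVec_mulVec, nonsing_inv_mul _ hA, one_mulVec]

theorem statement2_general (n p : ℕ)
    (kx : Matrix (Fin n) (Fin n) ℝ) (kθ : ℝ)
    (S : Matrix (Fin p) (Fin p) ℝ)
    (Γ : Matrix (Fin p) (Fin p) ℝ) (hΓsymm : Γ.IsSymm) (hΓinv : IsUnit Γ.det)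
    (Y : ℝ → Matrix (Fin n) (Fin p) ℝ)
    (xTilde : ℝ → Fin n → ℝ) (θTilde : ℝ → Fin p → ℝ)
    (hx : ∀ t : ℝ, HasDerivAt xTilde (Y t *ᵥ θTilde t - kx *ᵥ xTilde t) t)
    (hθ : ∀ t : ℝ, HasDerivAt θTilde
      (-(Γ *ᵥ ((Y t)ᵀ *ᵥ xTilde t)) - kθ • (Γ *ᵥ (S *ᵥ θTilde t))) t) :
    ∀ t : ℝ, HasDerivAt
      (fun τ => (1 / 2) * (xTilde τ ⬝ᵥ xTilde τ) + (1 / 2) * (θTilde τ ⬝ᵥ Γ⁻¹ *ᵥ θTilde τ))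
      (-(xTilde t ⬝ᵥ kx *ᵥ xTilde t) - kθ * (θTilde t ⬝ᵥ S *ᵥ θTilde t)) t := by
  intro t
  have hVx := ((hx t).dotProduct_mulVec_self isSymm_one).const_mul (1 / 2 : ℝ)
  have hVθ := ((hθ t).dotProduct_mulVec_self hΓsymm.inv).const_mul (1 / 2 : ℝ)
  simp only [one_mulVec] at hVx
  refine (hVx.add hVθ).congr_deriv ?_
  have hcoupling := dotProduct_transpose_mulVec (Y t) (θTilde t) (xTilde t)
  rw [mulVec_sub, mulVec_neg, mulVec_smul, nonsing_inv_mulVec_mulVec hΓinv,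
    nonsing_inv_mulVec_mulVec hΓinv]
  simp only [dotProduct_sub, dotProduct_neg, dotProduct_smul, smul_eq_mul, hcoupling]
  ring

/-- Derivative of the identifier Lyapunov function `V₀ = ½ x̃ᵀx̃ + ½ θ̃ᵀ Γ⁻¹ θ̃` along the
identification error dynamics `x̃' = Y θ̃ - kₓ x̃` and the concurrent-learning error dynamics
`θ̃' = -Γ Yᵀ x̃ - k_θ Γ S θ̃`:  `V₀' = -x̃ᵀ kₓ x̃ - k_θ θ̃ᵀ S θ̃`. -/
theorem statement2 (n p : ℕ) (hn : 0 < n) (hp : 0 < p)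
    (kx : Matrix (Fin n) (Fin n) ℝ) (kθ : ℝ)
    (S : Matrix (Fin p) (Fin p) ℝ)
    (Γ : Matrix (Fin p) (Fin p) ℝ) (hΓsymm : Γ.IsSymm) (hΓinv : IsUnit Γ.det)
    (Y : ℝ → Matrix (Fin n) (Fin p) ℝ)
    (xTilde : ℝ → Fin n → ℝ) (θTilde : ℝ → Fin p → ℝ)
    (hx : ∀ t : ℝ, HasDerivAt xTilde (Y t *ᵥ θTilde t - kx *ᵥ xTilde t) t)
    (hθ : ∀ t : ℝ, HasDerivAt θTilde
      (-(Γ *ᵥ ((Y t)ᵀ *ᵥ xTilde t)) - kθ • (Γ *ᵥ (S *ᵥ θTilde t))) t) :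
    ∀ t : ℝ, HasDerivAt
      (fun τ => (1 / 2) * (xTilde τ ⬝ᵥ xTilde τ) + (1 / 2) * (θTilde τ ⬝ᵥ Γ⁻¹ *ᵥ θTilde τ))
      (-(xTilde t ⬝ᵥ kx *ᵥ xTilde t) - kθ * (θTilde t ⬝ᵥ S *ᵥ θTilde t)) t :=
  statement2_general n p kx kθ S Γ hΓsymm hΓinv Y xTilde θTilde hx hθ
end

section
/- Let $n, p$ be positive natural numbers. Assume: $k_x \in \mathbb{R}^{n \times n}$ is symmetric with $x^{\mathsf T} k_x x \ge \underline{k_x}\|x\|^2$ for all $x$, where $\underline{k_x} > 0$; $S \in \mathbb{R}^{p \times p}$ is symmetric with $\theta^{\mathsf T} S \theta \ge \underline{y}\|\theta\|^2$ for all $\theta$, where $\underline{y} > 0$; $k_\theta > 0$; $\Gamma \in \mathbb{R}^{p \times p}$ is symmetric invertible and $\underline{\gamma}\|\theta\|^2 \le \theta^{\mathsf T}\Gamma^{-1}\theta \le \overline{\gamma}\|\theta\|^2$ for all $\theta$ with $0 < \underline{\gamma} \le \overline{\gamma}$. Let $Y : \mathbb{R} \to \mathbb{R}^{n \times p}$ be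 any function and let $\tilde{x} : \mathbb{R} \to \mathbb{R}^n$, $\tilde{\theta} : \mathbb{R} \to \mathbb{R}^p$ be differentiable with $\tilde{x}'(t) = Y(t)\tilde{\theta}(t) - k_x\tilde{x}(t)$ and $\tilde{\theta}'(t) = -\Gamma Y(t)^{\mathsf T}\tilde{x}(t) - k_\theta \Gamma S \tilde{\theta}(t)$. Set $v = \min(\underline{k_x}, \underline{y}\,k_\theta)$, $\underline{v} = \tfrac{1}{2}\min(1,\underline{\gamma})$, $\overline{v} = \tfrac{1}{2}\max(1,\overline{\gamma})$, and $V_0(t) = \tfrac{1}{2}\tilde{x}(t)^{\mathsf T}\tilde{x}(t) + \tfrac{1}{2}\tilde{\theta}(t)^{\mathsf T}\Gamma^{-1}\tilde{\theta}(t)$. Then for all $t \ge 0$: $V_0(t) \le V_0(0)\,e^{-(v/\overline{v})t}$, and consequently $\|\tilde{x}(t)\|^2 + \|\tilde{\theta}(t)\|^2 \le \frac{\overline{v}}{\underline{v}}\left(\|\tilde{x}(0)\|^2 + \|\tilde{\theta}(0)\|^2\right) e^{-(v/\overline{v})t}$; in particular $\tilde{x}(t) \to 0$ and $\tilde{\theta}(t)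 \to 0$ exponentially fast as $t \to \infty$. -/
/-!
`V₀` is a Lyapunov function for the error dynamics. Along solutions its derivative is
`-x̃ᵀ k_x x̃ - k_θ θ̃ᵀ S θ̃`: the adaptation law `θ̃' = -Γ Yᵀ x̃ - …` is chosen so that the cross
terms `x̃ᵀ Y θ̃` coming from the two components cancel. This derivative is at most
`-v (‖x̃‖² + ‖θ̃‖²)`, and `v̲ (‖x̃‖² + ‖θ̃‖²) ≤ V₀ ≤ v̄ (‖x̃‖² + ‖θ̃‖²)`, so `V₀' ≤ -(v / v̄) V₀`;
hence `V₀ e^{(v / v̄) t}` is antitone, which gives both exponential bounds.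
-/

open Matrix Filter

theorem HasDerivAt.dotProduct_mulVec {ι : Type*} [Fintype ι] [DecidableEq ι]
    {f g : ℝ → EuclideanSpace ℝ ι} {f' g' : EuclideanSpace ℝ ι} {t : ℝ} (A : Matrix ι ι ℝ)
    (hf : HasDerivAt f f' t) (hg : HasDerivAt g g' t) :
    HasDerivAt (fun s => f s ⬝ᵥ A *ᵥ g s) (f t ⬝ᵥ A *ᵥ g' + f' ⬝ᵥ A *ᵥ g t) t := by
  simpa only [Function.comp_def, inner_toEuclideanCLM] using
    hf.inner ℝ ((toEuclideanCLM (𝕜 := ℝ) A).hasFDerivAt.comp_hasDerivAt t hg)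

theorem Matrix.IsSymm.dotProduct_mulVec_comm {ι : Type*} [Fintype ι] {B : Matrix ι ι ℝ}
    (hB : B.IsSymm) (u w : ι → ℝ) : u ⬝ᵥ B *ᵥ w = w ⬝ᵥ B *ᵥ u := by
  rw [dotProduct_mulVec, ← mulVec_transpose, hB, dotProduct_comm]

theorem EuclideanSpace.dotProduct_self_eq_norm_sq {ι : Type*} [Fintype ι]
    (x : EuclideanSpace ℝ ι) : x ⬝ᵥ x = ‖x‖ ^ 2 := by
  rw [← real_inner_self_eq_norm_sq, EuclideanSpace.inner_eq_star_dotProduct, star_trivial]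

theorem le_mul_exp_of_hasDerivAt_le_neg_mul {V D : ℝ → ℝ} {c : ℝ}
    (hV : ∀ t, HasDerivAt V (D t) t) (hD : ∀ t, D t ≤ -c * V t) {t : ℝ} (ht : 0 ≤ t) :
    V t ≤ V 0 * Real.exp (-c * t) := by
  have hexp (s : ℝ) : HasDerivAt (fun s => Real.exp (c * s)) (Real.exp (c * s) * c) s := by
    simpa using ((hasDerivAt_id s).const_mul c).exp
  have hanti : Antitone fun s => V s * Real.exp (c * s) :=
    antitone_of_hasDerivAt_nonpos (fun s => (hV s).mul (hexp s)) fun s => by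
      calc D s * Real.exp (c * s) + V s * (Real.exp (c * s) * c)
          = (D s + c * V s) * Real.exp (c * s) := by ring
        _ ≤ 0 := mul_nonpos_of_nonpos_of_nonneg (by linarith [hD s]) (Real.exp_pos _).le
  have hmono := hanti ht
  simp only [mul_zero, Real.exp_zero, mul_one] at hmono
  rw [neg_mul, Real.exp_neg, ← div_eq_mul_inv, le_div_iff₀ (Real.exp_pos _)]
  exact hmono

theorem lyapunov_exp_decay {V D N : ℝ → ℝ} {a b v : ℝ} (ha : 0 < a) (hb : 0 < b) (hv : 0 ≤ v)
    (hV : ∀ t, HasDerivAt V (D t) t) (hlower : ∀ t, a * N t ≤ V t) (hupper : ∀ t, V t ≤ b * N t)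
    (hD : ∀ t, D t ≤ -v * N t) {t : ℝ} (ht : 0 ≤ t) :
    V t ≤ V 0 * Real.exp (-(v / b) * t) ∧ N t ≤ b / a * N 0 * Real.exp (-(v / b) * t) := by
  have hDV (s : ℝ) : D s ≤ -(v / b) * V s :=
    calc D s ≤ -v * N s := hD s
      _ = -(v / b) * (b * N s) := by field_simp
      _ ≤ -(v / b) * V s :=
        mul_le_mul_of_nonpos_left (hupper s) (neg_nonpos.mpr (div_nonneg hv hb.le))
  have hVt := le_mul_exp_of_hasDerivAt_le_neg_mul hV hDV ht
  refine ⟨hVt, ?_⟩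
  rw [div_mul_eq_mul_div, div_mul_eq_mul_div, le_div_iff₀ ha]
  nlinarith [hlower t, mul_le_mul_of_nonneg_right (hupper 0) (Real.exp_pos (-(v / b) * t)).le]

theorem tendsto_zero_of_norm_sq_le_mul_exp {E : Type*} [SeminormedAddCommGroup E] {f : ℝ → E}
    {C c : ℝ} (hc : 0 < c) (hf : ∀ t, 0 ≤ t → ‖f t‖ ^ 2 ≤ C * Real.exp (-c * t)) :
    Tendsto f atTop (nhds 0) := by
  have hbound : Tendsto (fun t => C * Real.exp (-c * t)) atTop (nhds 0) := by
    simpa using (Real.tendsto_exp_comp_nhds_zero.mpr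
      (tendsto_id.const_mul_atTop_of_neg (neg_neg_of_pos hc))).const_mul C
  have hsq : Tendsto (fun t => ‖f t‖ ^ 2) atTop (nhds 0) :=
    squeeze_zero' (.of_forall fun t => sq_nonneg _)
      (eventually_ge_atTop 0 |>.mono hf) hbound
  rw [tendsto_zero_iff_norm_tendsto_zero]
  simpa using hsq.sqrt

section Identifier

variable {ι κ : Type*} [Fintype ι] [Fintype κ]

noncomputable def identifierLyapunov [DecidableEq κ] (Γ : Matrix κ κ ℝ) (x : EuclideanSpace ℝ ι)
    (θ : EuclideanSpace ℝ κ) : ℝ :=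
  1 / 2 * (x ⬝ᵥ x) + 1 / 2 * (θ ⬝ᵥ Γ⁻¹ *ᵥ θ)

theorem hasDerivAt_identifier_lyapunov [DecidableEq ι] [DecidableEq κ] {kx : Matrix ι ι ℝ}
    {Y : Matrix ι κ ℝ} {S Γ : Matrix κ κ ℝ} {kθ : ℝ} (hΓsymm : Γ.IsSymm) (hΓinv : IsUnit Γ.det)
    {x : ℝ → EuclideanSpace ℝ ι} {θ : ℝ → EuclideanSpace ℝ κ} {t : ℝ}
    (hx : HasDerivAt x (WithLp.toLp 2 (Y *ᵥ θ t - kx *ᵥ x t)) t)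
    (hθ : HasDerivAt θ (WithLp.toLp 2 (-(Γ *ᵥ (Yᵀ *ᵥ x t)) - kθ • (Γ *ᵥ (S *ᵥ θ t)))) t) :
    HasDerivAt (fun s => identifierLyapunov Γ (x s) (θ s))
      (-(x t ⬝ᵥ kx *ᵥ x t) - kθ * (θ t ⬝ᵥ S *ᵥ θ t)) t := by
  have hxx := hx.dotProduct_mulVec 1 hx
  simp only [one_mulVec] at hxx
  refine ((hxx.const_mul (1 / 2)).add
    ((hθ.dotProduct_mulVec Γ⁻¹ hθ).const_mul (1 / 2))).congr_deriv ?_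
  have hcancel (u : κ → ℝ) : Γ⁻¹ *ᵥ (Γ *ᵥ u) = u := by
    rw [mulVec_mulVec, nonsing_inv_mul Γ hΓinv, one_mulVec]
  have hcross : Y *ᵥ (θ t).ofLp ⬝ᵥ (x t).ofLp = (θ t).ofLp ⬝ᵥ Yᵀ *ᵥ (x t).ofLp := by
    rw [dotProduct_comm, dotProduct_mulVec, ← mulVec_transpose, dotProduct_comm]
  rw [hΓsymm.inv.dotProduct_mulVec_comm _ (θ t).ofLp]
  simp only [mulVec_sub, mulVec_neg, mulVec_smul, hcancel, dotProduct_sub, sub_dotProduct,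
    dotProduct_neg, dotProduct_smul, smul_eq_mul, dotProduct_comm (x t).ofLp (Y *ᵥ _), hcross,
    dotProduct_comm (kx *ᵥ _)]
  ring

theorem identifier_lyapunov_le [DecidableEq κ] {Γ : Matrix κ κ ℝ} {γhi : ℝ}
    (hΓ : ∀ θ : EuclideanSpace ℝ κ, θ ⬝ᵥ Γ⁻¹ *ᵥ θ ≤ γhi * ‖θ‖ ^ 2)
    (x : EuclideanSpace ℝ ι) (θ : EuclideanSpace ℝ κ) :
    identifierLyapunov Γ x θ ≤ 1 / 2 * max 1 γhi * (‖x‖ ^ 2 + ‖θ‖ ^ 2) := by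
  rw [identifierLyapunov, EuclideanSpace.dotProduct_self_eq_norm_sq]
  nlinarith [hΓ θ, le_max_left 1 γhi, le_max_right 1 γhi, sq_nonneg ‖x‖, sq_nonneg ‖θ‖]

theorem le_identifier_lyapunov [DecidableEq κ] {Γ : Matrix κ κ ℝ} {γlo : ℝ}
    (hΓ : ∀ θ : EuclideanSpace ℝ κ, γlo * ‖θ‖ ^ 2 ≤ θ ⬝ᵥ Γ⁻¹ *ᵥ θ)
    (x : EuclideanSpace ℝ ι) (θ : EuclideanSpace ℝ κ) :
    1 / 2 * min 1 γlo * (‖x‖ ^ 2 + ‖θ‖ ^ 2) ≤ identifierLyapunov Γ x θ := by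
  rw [identifierLyapunov, EuclideanSpace.dotProduct_self_eq_norm_sq]
  nlinarith [hΓ θ, min_le_left 1 γlo, min_le_right 1 γlo, sq_nonneg ‖x‖, sq_nonneg ‖θ‖]

theorem identifier_dissipation_le {kx : Matrix ι ι ℝ} {S : Matrix κ κ ℝ} {kxlo ylo kθ : ℝ}
    (hkx : ∀ x : EuclideanSpace ℝ ι, kxlo * ‖x‖ ^ 2 ≤ x ⬝ᵥ kx *ᵥ x)
    (hS : ∀ θ : EuclideanSpace ℝ κ, ylo * ‖θ‖ ^ 2 ≤ θ ⬝ᵥ S *ᵥ θ) (hkθ : 0 ≤ kθ)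
    (x : EuclideanSpace ℝ ι) (θ : EuclideanSpace ℝ κ) :
    -(x ⬝ᵥ kx *ᵥ x) - kθ * (θ ⬝ᵥ S *ᵥ θ) ≤ -min kxlo (ylo * kθ) * (‖x‖ ^ 2 + ‖θ‖ ^ 2) := by
  nlinarith [hkx x, mul_le_mul_of_nonneg_left (hS θ) hkθ, min_le_left kxlo (ylo * kθ),
    min_le_right kxlo (ylo * kθ), sq_nonneg ‖x‖, sq_nonneg ‖θ‖]

end Identifier

theorem statement3_general (n p : ℕ)
    (kx : Matrix (Fin n) (Fin n) ℝ)
    (kxlo : ℝ) (hkxlo : 0 < kxlo)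
    (hkx : ∀ x : EuclideanSpace ℝ (Fin n), kxlo * ‖x‖ ^ 2 ≤ x ⬝ᵥ kx *ᵥ x)
    (S : Matrix (Fin p) (Fin p) ℝ)
    (ylo : ℝ) (hylo : 0 < ylo)
    (hS : ∀ θ : EuclideanSpace ℝ (Fin p), ylo * ‖θ‖ ^ 2 ≤ θ ⬝ᵥ S *ᵥ θ)
    (kθ : ℝ) (hkθ : 0 < kθ)
    (Γ : Matrix (Fin p) (Fin p) ℝ) (hΓsymm : Γ.IsSymm) (hΓinv : IsUnit Γ.det)
    (γlo γhi : ℝ) (hγlo : 0 < γlo)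
    (hΓbound : ∀ θ : EuclideanSpace ℝ (Fin p),
      γlo * ‖θ‖ ^ 2 ≤ θ ⬝ᵥ Γ⁻¹ *ᵥ θ ∧ θ ⬝ᵥ Γ⁻¹ *ᵥ θ ≤ γhi * ‖θ‖ ^ 2)
    (Y : ℝ → Matrix (Fin n) (Fin p) ℝ)
    (xTilde : ℝ → EuclideanSpace ℝ (Fin n)) (θTilde : ℝ → EuclideanSpace ℝ (Fin p))
    (hx : ∀ t : ℝ, HasDerivAt xTilde
      (WithLp.toLp 2 (Y t *ᵥ θTilde t - kx *ᵥ xTilde t) : EuclideanSpace ℝ (Fin n)) t)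
    (hθ : ∀ t : ℝ, HasDerivAt θTilde
      (WithLp.toLp 2 (-(Γ *ᵥ ((Y t)ᵀ *ᵥ xTilde t)) - kθ • (Γ *ᵥ (S *ᵥ θTilde t))) :
        EuclideanSpace ℝ (Fin p)) t)
    (v vlo vhi : ℝ) (hv : v = min kxlo (ylo * kθ))
    (hvlo : vlo = (1 / 2) * min 1 γlo) (hvhi : vhi = (1 / 2) * max 1 γhi)
    (V0 : ℝ → ℝ)
    (hV0 : V0 = fun t =>
      (1 / 2) * (xTilde t ⬝ᵥ xTilde t) + (1 / 2) * (θTilde t ⬝ᵥ Γ⁻¹ *ᵥ θTilde t)) :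
    (∀ t : ℝ, 0 ≤ t →
      V0 t ≤ V0 0 * Real.exp (-(v / vhi) * t) ∧
      ‖xTilde t‖ ^ 2 + ‖θTilde t‖ ^ 2 ≤
        (vhi / vlo) * (‖xTilde 0‖ ^ 2 + ‖θTilde 0‖ ^ 2) * Real.exp (-(v / vhi) * t)) ∧
    Tendsto xTilde atTop (nhds 0) ∧ Tendsto θTilde atTop (nhds 0) := by
  subst hv hvlo hvhi hV0
  have hv : 0 < min kxlo (ylo * kθ) := lt_min hkxlo (mul_pos hylo hkθ)
  have hdecay (t : ℝ) (ht : 0 ≤ t) :=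
    lyapunov_exp_decay (N := fun t => ‖xTilde t‖ ^ 2 + ‖θTilde t‖ ^ 2)
      (by positivity) (by positivity) hv.le
      (fun s => hasDerivAt_identifier_lyapunov hΓsymm hΓinv (hx s) (hθ s))
      (fun s => le_identifier_lyapunov (fun θ => (hΓbound θ).1) (xTilde s) (θTilde s))
      (fun s => identifier_lyapunov_le (fun θ => (hΓbound θ).2) (xTilde s) (θTilde s))
      (fun s => identifier_dissipation_le hkx hS hkθ.le (xTilde s) (θTilde s)) ht
  have hrate : 0 < min kxlo (ylo * kθ) / (1 / 2 * max 1 γhi) := by positivity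
  exact ⟨hdecay,
    tendsto_zero_of_norm_sq_le_mul_exp hrate fun t ht =>
      (le_add_of_nonneg_right (sq_nonneg _)).trans (hdecay t ht).2,
    tendsto_zero_of_norm_sq_le_mul_exp hrate fun t ht =>
      (le_add_of_nonneg_left (sq_nonneg _)).trans (hdecay t ht).2⟩

/-- Exponential convergence of the concurrent learning-based identifier: under positive
definiteness of the observer gain `kx`, the history-stack matrix `S`, and the (inverse)
adaptation gain `Γ⁻¹`, the Lyapunov function `V₀ = ½ x̃ᵀx̃ + ½ θ̃ᵀ Γ⁻¹ θ̃` decays like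
`V₀(0) e^{-(v/v̄)t}`, hence `‖x̃(t)‖² + ‖θ̃(t)‖² ≤ (v̄/v̲)(‖x̃(0)‖² + ‖θ̃(0)‖²) e^{-(v/v̄)t}`,
and in particular `x̃(t) → 0` and `θ̃(t) → 0`. -/
theorem statement3 (n p : ℕ) (hn : 0 < n) (hp : 0 < p)
    (kx : Matrix (Fin n) (Fin n) ℝ) (hkxsymm : kx.IsSymm)
    (kxlo : ℝ) (hkxlo : 0 < kxlo)
    (hkx : ∀ x : EuclideanSpace ℝ (Fin n), kxlo * ‖x‖ ^ 2 ≤ x ⬝ᵥ kx *ᵥ x)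
    (S : Matrix (Fin p) (Fin p) ℝ) (hSsymm : S.IsSymm)
    (ylo : ℝ) (hylo : 0 < ylo)
    (hS : ∀ θ : EuclideanSpace ℝ (Fin p), ylo * ‖θ‖ ^ 2 ≤ θ ⬝ᵥ S *ᵥ θ)
    (kθ : ℝ) (hkθ : 0 < kθ)
    (Γ : Matrix (Fin p) (Fin p) ℝ) (hΓsymm : Γ.IsSymm) (hΓinv : IsUnit Γ.det)
    (γlo γhi : ℝ) (hγlo : 0 < γlo) (hγ : γlo ≤ γhi)
    (hΓbound : ∀ θ : EuclideanSpace ℝ (Fin p),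
      γlo * ‖θ‖ ^ 2 ≤ θ ⬝ᵥ Γ⁻¹ *ᵥ θ ∧ θ ⬝ᵥ Γ⁻¹ *ᵥ θ ≤ γhi * ‖θ‖ ^ 2)
    (Y : ℝ → Matrix (Fin n) (Fin p) ℝ)
    (xTilde : ℝ → EuclideanSpace ℝ (Fin n)) (θTilde : ℝ → EuclideanSpace ℝ (Fin p))
    (hx : ∀ t : ℝ, HasDerivAt xTilde
      (WithLp.toLp 2 (Y t *ᵥ θTilde t - kx *ᵥ xTilde t) : EuclideanSpace ℝ (Fin n)) t)
    (hθ : ∀ t : ℝ, HasDerivAt θTilde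
      (WithLp.toLp 2 (-(Γ *ᵥ ((Y t)ᵀ *ᵥ xTilde t)) - kθ • (Γ *ᵥ (S *ᵥ θTilde t))) :
        EuclideanSpace ℝ (Fin p)) t)
    (v vlo vhi : ℝ) (hv : v = min kxlo (ylo * kθ))
    (hvlo : vlo = (1 / 2) * min 1 γlo) (hvhi : vhi = (1 / 2) * max 1 γhi)
    (V0 : ℝ → ℝ)
    (hV0 : V0 = fun t =>
      (1 / 2) * (xTilde t ⬝ᵥ xTilde t) + (1 / 2) * (θTilde t ⬝ᵥ Γ⁻¹ *ᵥ θTilde t)) :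
    (∀ t : ℝ, 0 ≤ t →
      V0 t ≤ V0 0 * Real.exp (-(v / vhi) * t) ∧
      ‖xTilde t‖ ^ 2 + ‖θTilde t‖ ^ 2 ≤
        (vhi / vlo) * (‖xTilde 0‖ ^ 2 + ‖θTilde 0‖ ^ 2) * Real.exp (-(v / vhi) * t)) ∧
    Tendsto xTilde atTop (nhds 0) ∧ Tendsto θTilde atTop (nhds 0) :=
  statement3_general n p kx kxlo hkxlo hkx S ylo hylo hS kθ hkθ Γ hΓsymm hΓinv γlo γhi hγlo hΓbound
    Y xTilde θTilde hx hθ v vlo vhi hv hvlo hvhi V0 hV0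
end

section
/- Fix positive natural numbers $n, m, p, L$ and the following data at a point $x \in \mathbb{R}^n$: matrices $Y \in \mathbb{R}^{n \times p}$, $g \in \mathbb{R}^{n \times m}$, $Q \in \mathbb{R}^{n \times n}$, a symmetric invertible matrix $R \in \mathbb{R}^{m \times m}$, a matrix $\sigma' \in \mathbb{R}^{L \times n}$ (Jacobian of the activation vector), a vector $\varepsilon' \in \mathbb{R}^n$ (gradient of the reconstruction error), and vectors $\theta^*, \hat{\theta} \in \mathbb{R}^p$ and $W^*, \hat{W}_c, \hat{W}_a \in \mathbb{R}^L$. Define $f = Y\theta^*$, $\hat{f} = Y\hat{\theta}$, $\tilde{\theta} = \theta^* - \hat{\theta}$, $\tilde{W}_c = W^* - \hat{W}_c$, $\tilde{W}_a = W^* - \hat{W}_a$, $G = gR^{-1}g^{\mathsf T}$, $G_\sigma = \sigma' G \sigma'^{\mathsf T}$, $G_\varepsilon = \varepsilon'^{\mathsf T} G\, \varepsilon'$, the optimal policy $u^* = -\tfrac{1}{2}R^{-1}g^{\mathsf T}(\sigma'^{\mathsf T}W^* + \varepsilon')$, the approximate policy $\hat{u} = -\tfrac{1}{2}R^{-1}g^{\mathsf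 T}\sigma'^{\mathsf T}\hat{W}_a$, the regressor $\omega = \sigma'(\hat{f} + g\hat{u})$, and the approximate Bellman error $\hat{\delta} = \hat{W}_c^{\mathsf T}\sigma'(\hat{f} + g\hat{u}) + x^{\mathsf T}Qx + \hat{u}^{\mathsf T}R\hat{u}$. Suppose the Hamilton–Jacobi–Bellman equation holds at $x$: $(W^{*{\mathsf T}}\sigma' + \varepsilon'^{\mathsf T})(f + gu^*) + x^{\mathsf T}Qx + u^{*{\mathsf T}}Ru^* = 0$. Then $\hat{\delta} = -\,\omega^{\mathsf T}\tilde{W}_c - W^{*{\mathsf T}}\sigma' Y \tilde{\theta} + \tfrac{1}{4}\tilde{W}_a^{\mathsf T}G_\sigma\tilde{W}_a + \tfrac{1}{4}G_\varepsilon - \varepsilon'^{\mathsf T} f + \tfrac{1}{2}W^{*{\mathsf T}}\sigma' G\,\varepsilon'$. -/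
open Matrix

/-!
The HJB equation determines the state cost `xᵀQx = -∇V*·f + ¼ ∇V*ᵀ G ∇V*`, and for any policy of
the form `u = -½ R⁻¹ gᵀ v` one has `g u = -½ G v` and `uᵀ R u = ¼ vᵀ G v`. After these
substitutions, and moving `σ'` across every dot product, both sides are combinations of dot
products and values of the symmetric bilinear form of `G`, and they agree after expansion.
-/

lemma dotProduct_mulVec_eq_transpose_mulVec_dotProduct {ι κ : Type*} [Fintype ι] [Fintype κ]
    (A : Matrix ι κ ℝ) (w : ι → ℝ) (z : κ → ℝ) : w ⬝ᵥ A *ᵥ z = (Aᵀ *ᵥ w) ⬝ᵥ z := by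
  rw [dotProduct_mulVec, mulVec_transpose]

lemma isSymm_mul_inv_mul_transpose {ι κ : Type*} [Fintype κ] [DecidableEq κ]
    (g : Matrix ι κ ℝ) {R : Matrix κ κ ℝ} (hR : R.IsSymm) : (g * R⁻¹ * gᵀ).IsSymm := by
  rw [IsSymm, transpose_mul, transpose_mul, transpose_transpose, transpose_nonsing_inv,
    hR.eq, Matrix.mul_assoc]

section GreedyPolicy

variable {ι κ : Type*} [Fintype ι] [Fintype κ] [DecidableEq κ]
  (g : Matrix ι κ ℝ) (R : Matrix κ κ ℝ)

/-- The minimiser over `u` of the Hamiltonian `v ⬝ᵥ (f + g *ᵥ u) + uᵀ R u`, for `R` symmetric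
positive definite. -/
noncomputable def greedyPolicy (v : ι → ℝ) : κ → ℝ :=
  -((1 / 2 : ℝ) • ((R⁻¹ * gᵀ) *ᵥ v))

lemma dotProduct_add_mulVec_greedyPolicy (w f v : ι → ℝ) :
    w ⬝ᵥ (f + g *ᵥ greedyPolicy g R v)
      = w ⬝ᵥ f - (1 / 2) * (w ⬝ᵥ (g * R⁻¹ * gᵀ) *ᵥ v) := by
  rw [greedyPolicy, mulVec_neg, mulVec_smul, mulVec_mulVec, ← Matrix.mul_assoc, dotProduct_add,
    dotProduct_neg, dotProduct_smul, smul_eq_mul, sub_eq_add_neg]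

lemma greedyPolicy_dotProduct_mulVec_self (hR : IsUnit R.det) (v : ι → ℝ) :
    greedyPolicy g R v ⬝ᵥ R *ᵥ greedyPolicy g R v
      = (1 / 4) * (v ⬝ᵥ (g * R⁻¹ * gᵀ) *ᵥ v) := by
  have hquad (z : κ → ℝ) : (R⁻¹ *ᵥ z) ⬝ᵥ R *ᵥ (R⁻¹ *ᵥ z) = z ⬝ᵥ R⁻¹ *ᵥ z := by
    rw [mulVec_mulVec, mul_nonsing_inv R hR, one_mulVec, dotProduct_comm]
  rw [greedyPolicy, ← mulVec_mulVec, mulVec_neg, mulVec_smul, dotProduct_neg, neg_dotProduct,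
    neg_neg, dotProduct_smul, smul_dotProduct, hquad, smul_eq_mul, smul_eq_mul,
    ← mulVec_mulVec, ← mulVec_mulVec, dotProduct_mulVec_eq_transpose_mulVec_dotProduct g]
  ring

lemma state_cost_eq_of_hjb (hR : IsUnit R.det) {p f : ι → ℝ} {c : ℝ}
    (hHJB : p ⬝ᵥ (f + g *ᵥ greedyPolicy g R p) + c
      + greedyPolicy g R p ⬝ᵥ R *ᵥ greedyPolicy g R p = 0) :
    c = -(p ⬝ᵥ f) + (1 / 4) * (p ⬝ᵥ (g * R⁻¹ * gᵀ) *ᵥ p) := by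
  rw [dotProduct_add_mulVec_greedyPolicy, greedyPolicy_dotProduct_mulVec_self g R hR] at hHJB
  linarith

end GreedyPolicy

/-- In the main theorem `a = σ'ᵀW*`, `b = σ'ᵀŴa`, `c = σ'ᵀŴc`, `e = ε'`, and the state cost
has already been replaced by its value from the HJB equation. -/
lemma bellman_error_expansion {ι : Type*} [Fintype ι] {G : Matrix ι ι ℝ} (hG : G.IsSymm)
    (a b c e f fhat : ι → ℝ) :
    c ⬝ᵥ fhat - (1 / 2) * (c ⬝ᵥ G *ᵥ b)
        + (-((a + e) ⬝ᵥ f) + (1 / 4) * ((a + e) ⬝ᵥ G *ᵥ (a + e))) + (1 / 4) * (b ⬝ᵥ G *ᵥ b)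
      = -((a - c) ⬝ᵥ fhat - (1 / 2) * ((a - c) ⬝ᵥ G *ᵥ b)) - a ⬝ᵥ (f - fhat)
        + (1 / 4) * ((a - b) ⬝ᵥ G *ᵥ (a - b)) + (1 / 4) * (e ⬝ᵥ G *ᵥ e)
        - e ⬝ᵥ f + (1 / 2) * (a ⬝ᵥ G *ᵥ e) := by
  have hsymm : ∀ v w : ι → ℝ, v ⬝ᵥ G *ᵥ w = w ⬝ᵥ G *ᵥ v := fun v w => by
    rw [dotProduct_mulVec_eq_transpose_mulVec_dotProduct, hG.eq, dotProduct_comm]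
  simp only [mulVec_add, mulVec_sub, dotProduct_add, add_dotProduct, dotProduct_sub,
    sub_dotProduct]
  rw [hsymm e a, hsymm b a]
  ring

theorem statement6_general (n m p L : ℕ)
    (x : Fin n → ℝ)
    (Y : Matrix (Fin n) (Fin p) ℝ) (g : Matrix (Fin n) (Fin m) ℝ)
    (Q : Matrix (Fin n) (Fin n) ℝ)
    (R : Matrix (Fin m) (Fin m) ℝ) (hRsymm : R.IsSymm) (hRinv : IsUnit R.det)
    (σ' : Matrix (Fin L) (Fin n) ℝ) (ε' : Fin n → ℝ)
    (θstar θhat : Fin p → ℝ) (Wstar Wc Wa : Fin L → ℝ)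
    (f fhat : Fin n → ℝ) (hf : f = Y *ᵥ θstar) (hfhat : fhat = Y *ᵥ θhat)
    (θTilde : Fin p → ℝ) (hθTilde : θTilde = θstar - θhat)
    (WcTilde WaTilde : Fin L → ℝ)
    (hWcTilde : WcTilde = Wstar - Wc) (hWaTilde : WaTilde = Wstar - Wa)
    (G : Matrix (Fin n) (Fin n) ℝ) (hG : G = g * R⁻¹ * gᵀ)
    (Gσ : Matrix (Fin L) (Fin L) ℝ) (hGσ : Gσ = σ' * G * σ'ᵀ)
    (Gε : ℝ) (hGε : Gε = ε' ⬝ᵥ G *ᵥ ε')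
    (ustar uhat : Fin m → ℝ)
    (hustar : ustar = -((1 / 2 : ℝ) • ((R⁻¹ * gᵀ) *ᵥ (σ'ᵀ *ᵥ Wstar + ε'))))
    (huhat : uhat = -((1 / 2 : ℝ) • ((R⁻¹ * gᵀ) *ᵥ (σ'ᵀ *ᵥ Wa))))
    (ω : Fin L → ℝ) (hω : ω = σ' *ᵥ (fhat + g *ᵥ uhat))
    (δhat : ℝ)
    (hδhat : δhat = Wc ⬝ᵥ (σ' *ᵥ (fhat + g *ᵥ uhat)) + x ⬝ᵥ Q *ᵥ x + uhat ⬝ᵥ R *ᵥ uhat)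
    (hHJB : (σ'ᵀ *ᵥ Wstar + ε') ⬝ᵥ (f + g *ᵥ ustar) + x ⬝ᵥ Q *ᵥ x
      + ustar ⬝ᵥ R *ᵥ ustar = 0) :
    δhat = -(ω ⬝ᵥ WcTilde) - Wstar ⬝ᵥ (σ' *ᵥ (Y *ᵥ θTilde))
      + (1 / 4) * (WaTilde ⬝ᵥ Gσ *ᵥ WaTilde) + (1 / 4) * Gε
      - ε' ⬝ᵥ f + (1 / 2) * (Wstar ⬝ᵥ (σ' *ᵥ (G *ᵥ ε'))) := by
  change ustar = greedyPolicy g R _ at hustar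
  change uhat = greedyPolicy g R _ at huhat
  subst hustar huhat hf hfhat hθTilde hWcTilde hWaTilde hω hδhat hG hGε hGσ
  rw [state_cost_eq_of_hjb g R hRinv hHJB, greedyPolicy_dotProduct_mulVec_self g R hRinv,
    dotProduct_comm _ (Wstar - Wc), ← mulVec_mulVec _ _ σ'ᵀ, ← mulVec_mulVec _ σ']
  simp only [dotProduct_mulVec_eq_transpose_mulVec_dotProduct σ']
  rw [dotProduct_add_mulVec_greedyPolicy, dotProduct_add_mulVec_greedyPolicy,
    mulVec_sub σ'ᵀ, mulVec_sub σ'ᵀ, mulVec_sub Y]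
  exact bellman_error_expansion (isSymm_mul_inv_mul_transpose g hRsymm) _ _ _ _ _ _

/-- The unmeasurable form of the approximate Bellman error: assuming the HJB equation holds
at `x`, the approximate Bellman error `δ̂`, computed from the critic/actor weight estimates
and the drift-parameter estimate, equals
`-ωᵀW̃c - W*ᵀσ'Yθ̃ + ¼ W̃aᵀ G_σ W̃a + ¼ G_ε - ε'ᵀ f + ½ W*ᵀ σ' G ε'`. -/
theorem statement6 (n m p L : ℕ) (hn : 0 < n) (hm : 0 < m) (hp : 0 < p) (hL : 0 < L)
    (x : Fin n → ℝ)
    (Y : Matrix (Fin n) (Fin p) ℝ) (g : Matrix (Fin n) (Fin m) ℝ)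
    (Q : Matrix (Fin n) (Fin n) ℝ)
    (R : Matrix (Fin m) (Fin m) ℝ) (hRsymm : R.IsSymm) (hRinv : IsUnit R.det)
    (σ' : Matrix (Fin L) (Fin n) ℝ) (ε' : Fin n → ℝ)
    (θstar θhat : Fin p → ℝ) (Wstar Wc Wa : Fin L → ℝ)
    (f fhat : Fin n → ℝ) (hf : f = Y *ᵥ θstar) (hfhat : fhat = Y *ᵥ θhat)
    (θTilde : Fin p → ℝ) (hθTilde : θTilde = θstar - θhat)
    (WcTilde WaTilde : Fin L → ℝ)
    (hWcTilde : WcTilde = Wstar - Wc) (hWaTilde : WaTilde = Wstar - Wa)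
    (G : Matrix (Fin n) (Fin n) ℝ) (hG : G = g * R⁻¹ * gᵀ)
    (Gσ : Matrix (Fin L) (Fin L) ℝ) (hGσ : Gσ = σ' * G * σ'ᵀ)
    (Gε : ℝ) (hGε : Gε = ε' ⬝ᵥ G *ᵥ ε')
    (ustar uhat : Fin m → ℝ)
    (hustar : ustar = -((1 / 2 : ℝ) • ((R⁻¹ * gᵀ) *ᵥ (σ'ᵀ *ᵥ Wstar + ε'))))
    (huhat : uhat = -((1 / 2 : ℝ) • ((R⁻¹ * gᵀ) *ᵥ (σ'ᵀ *ᵥ Wa))))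
    (ω : Fin L → ℝ) (hω : ω = σ' *ᵥ (fhat + g *ᵥ uhat))
    (δhat : ℝ)
    (hδhat : δhat = Wc ⬝ᵥ (σ' *ᵥ (fhat + g *ᵥ uhat)) + x ⬝ᵥ Q *ᵥ x + uhat ⬝ᵥ R *ᵥ uhat)
    (hHJB : (σ'ᵀ *ᵥ Wstar + ε') ⬝ᵥ (f + g *ᵥ ustar) + x ⬝ᵥ Q *ᵥ x
      + ustar ⬝ᵥ R *ᵥ ustar = 0) :
    δhat = -(ω ⬝ᵥ WcTilde) - Wstar ⬝ᵥ (σ' *ᵥ (Y *ᵥ θTilde))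
      + (1 / 4) * (WaTilde ⬝ᵥ Gσ *ᵥ WaTilde) + (1 / 4) * Gε
      - ε' ⬝ᵥ f + (1 / 2) * (Wstar ⬝ᵥ (σ' *ᵥ (G *ᵥ ε'))) :=
  statement6_general n m p L x Y g Q R hRsymm hRinv σ' ε' θstar θhat Wstar Wc Wa f fhat hf hfhat
    θTilde hθTilde WcTilde WaTilde hWcTilde hWaTilde G hG Gσ hGσ Gε hGε ustar uhat hustar huhat ω hω
    δhat hδhat hHJB
end
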